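/- Let χ be a realizable uniform rank-3 chirotope on n ≥ 3 elements with χ(1,2,3) = +1, let a_1, a_2, a_3 ∈ {1,…,n} be pairwise distinct, let σ_1, σ_2, σ_3 ∈ {+1,−1}, and let χ' be the lexicographic extension of χ by [a_1^{σ_1}, a_2^{σ_2}, a_3^{σ_3}]. Then the deletion map ℛ(χ') → ℛ(χ) sending (v_1,…,v_n,v_{n+1}) to (v_1,…,v_n) is surjective, and for every (v_1,…,v_n) ∈ ℛ(χ) its fiber, namely {w ∈ ℝ³ : sign(det(v_i,v_j,w)) = χ'(i,j,n+1) for all distinct i,j ∈ {1,…,n}}, is a nonempty open convex subset of ℝ³ defined by finitely many strict linear inequalities in w whose coefficients depend polynomially on (v_1,…,v_n). -/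

import Mathlib

noncomputable section

/-- A primary basic semialgebraic set in `ℝ^m` defined over `ℤ`: the solution set of finitely
many polynomial equalities and *strict* polynomial inequalities with integer coefficients. -/
def IsPrimaryBasicSemialgebraicZ {m : ℕ} (S : Set (Fin m → ℝ)) : Prop :=
  ∃ (k l : ℕ) (f : Fin k → MvPolynomial (Fin m) ℤ) (g : Fin l → MvPolynomial (Fin m) ℤ),
    S = {x : Fin m → ℝ |
      (∀ i, MvPolynomial.aeval x (f i) = (0 : ℝ)) ∧
      (∀ j, (0 : ℝ) < MvPolynomial.aeval x (g j))}

/-- `S ⊆ ℝ^d` is a stable projection of `T ⊆ ℝ^{d+d'}`: the coordinate projection maps `T`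
onto `S`, and over each `x ∈ S` the fiber of `T` is a nonempty set given by linear equalities
and strict linear inequalities in the fiber variables, whose coefficients depend polynomially
on `x` (i.e. the relative interior of a nonempty polyhedron depending polynomially on `x`). -/
def IsStableProjection {d d' : ℕ} (S : Set (Fin d → ℝ)) (T : Set (Fin (d + d') → ℝ)) : Prop :=
  ∃ (k l : ℕ) (A : Fin k → Fin d' → MvPolynomial (Fin d) ℝ) (b : Fin k → MvPolynomial (Fin d) ℝ)
    (C : Fin l → Fin d' → MvPolynomial (Fin d) ℝ) (c : Fin l → MvPolynomial (Fin d) ℝ),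
    (∀ x ∈ S, ∃ y : Fin d' → ℝ, Fin.append x y ∈ T) ∧
    ∀ (x : Fin d → ℝ) (y : Fin d' → ℝ),
      Fin.append x y ∈ T ↔
        x ∈ S ∧
        (∀ i, (∑ j, MvPolynomial.eval x (A i j) * y j) + MvPolynomial.eval x (b i) = 0) ∧
        (∀ i, 0 < (∑ j, MvPolynomial.eval x (C i j) * y j) + MvPolynomial.eval x (c i))

/-- `f` is coordinatewise a rational function on `S` (denominators nonvanishing on `S`). -/
def IsRationalMapOn {d e : ℕ} (S : Set (Fin d → ℝ)) (f : (Fin d → ℝ) → Fin e → ℝ) : Prop :=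
  ∀ i : Fin e, ∃ p q : MvPolynomial (Fin d) ℝ, ∀ x ∈ S,
    MvPolynomial.eval x q ≠ 0 ∧ f x i = MvPolynomial.eval x p / MvPolynomial.eval x q

/-- `S` and `T` are rationally equivalent: there are mutually inverse bijections between them
which are coordinatewise rational (hence in particular a homeomorphism). -/
def RationallyEquivalent {d e : ℕ} (S : Set (Fin d → ℝ)) (T : Set (Fin e → ℝ)) : Prop :=
  ∃ (f : (Fin d → ℝ) → Fin e → ℝ) (g : (Fin e → ℝ) → Fin d → ℝ),
    IsRationalMapOn S f ∧ IsRationalMapOn T g ∧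
    (∀ x ∈ S, f x ∈ T) ∧ (∀ y ∈ T, g y ∈ S) ∧
    (∀ x ∈ S, g (f x) = x) ∧ (∀ y ∈ T, f (g y) = y)

/-- One generating step of stable equivalence: a stable projection (in either direction,
symmetry being supplied by the generated equivalence) or a rational equivalence. -/
def StableStep (X Y : Σ d : ℕ, Set (Fin d → ℝ)) : Prop :=
  (∃ (d' : ℕ) (T : Set (Fin (X.1 + d') → ℝ)),
      Y = ⟨X.1 + d', T⟩ ∧ IsStableProjection X.2 T) ∨
  RationallyEquivalent X.2 Y.2

/-- Stable equivalence: the equivalence relation generated by stable projections and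
rational equivalences. -/
def StablyEquivalent (X Y : Σ d : ℕ, Set (Fin d → ℝ)) : Prop :=
  Relation.EqvGen StableStep X Y

/-- The index of the `c`-th coordinate of the `p`-th point in the flattening
`(ℝ^d)^n ≃ ℝ^{d·n}`. -/
def flatIdx {n d : ℕ} (p : Fin n) (c : Fin d) : Fin (d * n) :=
  ⟨d * p.1 + c.1, by
    have h1 : d * (p.1 + 1) ≤ d * n := Nat.mul_le_mul le_rfl p.2
    have h2 : d * (p.1 + 1) = d * p.1 + d := by ring
    have h3 := c.2
    omega⟩

/-- Flatten a set of point configurations `(ℝ^d)^n` into a subset of `ℝ^{d·n}`. -/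
def flat {n d : ℕ} (R : Set (Fin n → Fin d → ℝ)) : Set (Fin (d * n) → ℝ) :=
  {x | (fun (p : Fin n) (c : Fin d) => x (flatIdx p c)) ∈ R}

/-- The determinant of three vectors in `ℝ³`. -/
def det3 (u v w : Fin 3 → ℝ) : ℝ :=
  u 0 * (v 1 * w 2 - v 2 * w 1) - u 1 * (v 0 * w 2 - v 2 * w 0) +
    u 2 * (v 0 * w 1 - v 1 * w 0)

/-- A map on triples is alternating: swapping two adjacent arguments changes the sign. -/
def IsAlternating3 {n : ℕ} (χ : Fin n → Fin n → Fin n → ℝ) : Prop :=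
  ∀ i j k : Fin n, χ j i k = -χ i j k ∧ χ i k j = -χ i j k

/-- `v` is a realization of the uniform chirotope `χ`: for all distinct `i, j, k`,
the sign of `det(v i, v j, v k)` is `χ i j k`. -/
def IsRealizationOfUniform {n : ℕ} (χ : Fin n → Fin n → Fin n → ℝ)
    (v : Fin n → Fin 3 → ℝ) : Prop :=
  ∀ i j k : Fin n, i ≠ j → i ≠ k → j ≠ k →
    Real.sign (det3 (v i) (v j) (v k)) = χ i j k

/-- A realizable uniform rank-3 chirotope on `n` elements. -/
def IsRealizableUniformChirotope {n : ℕ} (χ : Fin n → Fin n → Fin n → ℝ) : Prop :=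
  IsAlternating3 χ ∧
  (∀ i j k : Fin n, i ≠ j → i ≠ k → j ≠ k → χ i j k = 1 ∨ χ i j k = -1) ∧
  ∃ v, IsRealizationOfUniform χ v

/-- The normalized realization space of a uniform rank-3 chirotope `χ`
(normalized so that the first three vectors are the standard basis of `ℝ³`,
which presupposes `χ 1 2 3 = +1`). -/
def uniformChirotopeRealizationSpace {n : ℕ} (hn : 3 ≤ n)
    (χ : Fin n → Fin n → Fin n → ℝ) : Set (Fin n → Fin 3 → ℝ) :=
  {v | v ⟨0, by omega⟩ = ![1, 0, 0] ∧ v ⟨1, by omega⟩ = ![0, 1, 0] ∧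
       v ⟨2, by omega⟩ = ![0, 0, 1] ∧ IsRealizationOfUniform χ v}

/-- `χ'` is the lexicographic extension of `χ` by `[a₁^{σ₁}, a₂^{σ₂}, a₃^{σ₃}]`:
the alternating sign map on triples from `{1,…,n+1}` that agrees with `χ` on triples from
`{1,…,n}` and whose values on the new element `n+1` follow the lexicographic rule. -/
def IsLexExtension {n : ℕ} (χ : Fin n → Fin n → Fin n → ℝ)
    (a₁ a₂ a₃ : Fin n) (σ₁ σ₂ σ₃ : ℝ)
    (χ' : Fin (n + 1) → Fin (n + 1) → Fin (n + 1) → ℝ) : Prop :=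
  IsAlternating3 χ' ∧
  (∀ i j k : Fin n, χ' i.castSucc j.castSucc k.castSucc = χ i j k) ∧
  ∀ i j : Fin n, i ≠ j →
    χ' i.castSucc j.castSucc (Fin.last n) =
      if a₁ ≠ i ∧ a₁ ≠ j then σ₁ * χ i j a₁
      else if a₂ ≠ i ∧ a₂ ≠ j then σ₂ * χ i j a₂
      else σ₃ * χ i j a₃

/-- The fiber over a configuration `v` of the deletion map associated to an extension `χ'`:
the set of positions `w` for the new point compatible with the signs prescribed by `χ'`. -/
def lexFiber {n : ℕ} (χ' : Fin (n + 1) → Fin (n + 1) → Fin (n + 1) → ℝ)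
    (v : Fin n → Fin 3 → ℝ) : Set (Fin 3 → ℝ) :=
  {w | ∀ i j : Fin n, i ≠ j →
    Real.sign (det3 (v i) (v j) w) = χ' i.castSucc j.castSucc (Fin.last n)}

namespace LexAux

lemma sign_one_iff {x : ℝ} : Real.sign x = 1 ↔ 0 < x := by
  constructor
  · intro h
    rcases lt_trichotomy x 0 with h1 | h1 | h1
    · rw [Real.sign_of_neg h1] at h; norm_num at h
    · rw [h1, Real.sign_zero] at h; norm_num at h
    · exact h1
  · exact Real.sign_of_pos

lemma sign_neg_one_iff {x : ℝ} : Real.sign x = -1 ↔ x < 0 := by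
  constructor
  · intro h
    rcases lt_trichotomy x 0 with h1 | h1 | h1
    · exact h1
    · rw [h1, Real.sign_zero] at h; norm_num at h
    · rw [Real.sign_of_pos h1] at h; norm_num at h
  · exact Real.sign_of_neg

lemma sign_pm_mul {σ x : ℝ} (hσ : σ = 1 ∨ σ = -1) :
    Real.sign (σ * x) = σ * Real.sign x := by
  rcases hσ with h | h <;> subst h
  · simp
  · simp [Real.sign_neg]

lemma sign_pos_mul {ε z : ℝ} (hε : 0 < ε) : Real.sign (ε * z) = Real.sign z := by
  rcases lt_trichotomy z 0 with h | h | h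
  · rw [Real.sign_of_neg h, Real.sign_of_neg (by nlinarith)]
  · simp [h]
  · rw [Real.sign_of_pos h, Real.sign_of_pos (by nlinarith)]

lemma sign_add_of_abs_lt {x y : ℝ} (h : |y| < |x|) :
    Real.sign (x + y) = Real.sign x := by
  rcases lt_trichotomy x 0 with hx | hx | hx
  · rw [Real.sign_of_neg hx, Real.sign_of_neg (by cases abs_lt.mp h; nlinarith [abs_of_neg hx])]
  · exfalso; rw [hx, abs_zero] at h; exact (abs_nonneg y).not_gt h
  · rw [Real.sign_of_pos hx, Real.sign_of_pos (by cases abs_lt.mp h; nlinarith [abs_of_pos hx])]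

/-- Key: sign of `A + εB + ε²C` for small positive `ε`. -/
lemma sign_perturb {A B C s : ℝ}
    (h : (A ≠ 0 ∧ Real.sign A = s) ∨ (A = 0 ∧ B ≠ 0 ∧ Real.sign B = s) ∨
      (A = 0 ∧ B = 0 ∧ C ≠ 0 ∧ Real.sign C = s)) :
    ∃ ε₀ > 0, ∀ ε : ℝ, 0 < ε → ε < ε₀ → Real.sign (A + ε * B + ε ^ 2 * C) = s := by
  rcases h with ⟨hA, hs⟩ | ⟨hA, hB, hs⟩ | ⟨hA, hB, hC, hs⟩
  · refine ⟨min 1 (|A| / (|B| + |C| + 1)), by positivity, fun ε hε hε' => ?_⟩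
    have hε1 : ε ≤ 1 := le_of_lt (lt_of_lt_of_le hε' (min_le_left _ _))
    have hε2 : ε < |A| / (|B| + |C| + 1) := lt_of_lt_of_le hε' (min_le_right _ _)
    have h1 : |ε * B + ε ^ 2 * C| < |A| := by
      have h2 : |ε * B + ε ^ 2 * C| ≤ ε * |B| + ε ^ 2 * |C| := by
        calc |ε * B + ε ^ 2 * C| ≤ |ε * B| + |ε ^ 2 * C| := abs_add_le _ _
        _ = ε * |B| + ε ^ 2 * |C| := by
            rw [abs_mul, abs_mul, abs_of_pos hε, abs_of_pos (by positivity : (0:ℝ) < ε ^ 2)]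
      have h3 : ε ^ 2 ≤ ε := by nlinarith
      have h4 : ε * (|B| + |C| + 1) < |A| := (lt_div_iff₀ (by positivity)).mp hε2
      nlinarith [abs_nonneg B, abs_nonneg C]
    calc Real.sign (A + ε * B + ε ^ 2 * C) = Real.sign (A + (ε * B + ε ^ 2 * C)) := by ring_nf
    _ = Real.sign A := sign_add_of_abs_lt h1
    _ = s := hs
  · refine ⟨|B| / (|C| + 1), by positivity, fun ε hε hε' => ?_⟩
    have h1 : |ε * C| < |B| := by
      rw [abs_mul, abs_of_pos hε]
      have := (lt_div_iff₀ (by positivity : (0:ℝ) < |C| + 1)).mp hε'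
      nlinarith [abs_nonneg C]
    have : A + ε * B + ε ^ 2 * C = ε * (B + ε * C) := by rw [hA]; ring
    rw [this, sign_pos_mul hε, sign_add_of_abs_lt h1, hs]
  · refine ⟨1, one_pos, fun ε hε _ => ?_⟩
    have : A + ε * B + ε ^ 2 * C = ε ^ 2 * C := by rw [hA, hB]; ring
    rw [this, sign_pos_mul (by positivity), hs]

lemma det3_swap12 (u v w : Fin 3 → ℝ) : det3 v u w = -det3 u v w := by
  simp only [det3]; ring
lemma det3_swap23 (u v w : Fin 3 → ℝ) : det3 u w v = -det3 u v w := by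
  simp only [det3]; ring
lemma det3_rot (u v w : Fin 3 → ℝ) : det3 w u v = det3 u v w := by
  simp only [det3]; ring
lemma det3_self13 (u v : Fin 3 → ℝ) : det3 u v u = 0 := by simp only [det3]; ring
lemma det3_self23 (u v : Fin 3 → ℝ) : det3 u v v = 0 := by simp only [det3]; ring

lemma det3_comb (u v a b c : Fin 3 → ℝ) (p q r : ℝ) :
    det3 u v (fun i => p * a i + q * b i + r * c i) =
      p * det3 u v a + q * det3 u v b + r * det3 u v c := by
  simp only [det3]; ring

end LexAux

namespace LexAux

lemma snoc_mem_iff {n : ℕ} (hn : 3 ≤ n)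
    (χ : Fin n → Fin n → Fin n → ℝ)
    (χ' : Fin (n+1) → Fin (n+1) → Fin (n+1) → ℝ)
    (halt : IsAlternating3 χ')
    (hagree : ∀ i j k : Fin n, χ' i.castSucc j.castSucc k.castSucc = χ i j k)
    (v : Fin n → Fin 3 → ℝ) (hv : v ∈ uniformChirotopeRealizationSpace hn χ)
    (w : Fin 3 → ℝ) :
    Fin.snoc v w ∈ uniformChirotopeRealizationSpace (Nat.le_succ_of_le hn) χ' ↔
      w ∈ lexFiber χ' v := by
  obtain ⟨hv0, hv1, hv2, hvr⟩ := hv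
  constructor
  · rintro ⟨-, -, -, hr⟩ i j hij
    have h := hr i.castSucc j.castSucc (Fin.last n)
      (by simpa using (Fin.castSucc_injective n).ne hij)
      ((Fin.castSucc_lt_last i).ne) ((Fin.castSucc_lt_last j).ne)
    simpa [Fin.snoc_castSucc, Fin.snoc_last] using h
  · intro hw
    have e0 : (⟨0, by omega⟩ : Fin (n+1)) = (⟨0, by omega⟩ : Fin n).castSucc := rfl
    have e1 : (⟨1, by omega⟩ : Fin (n+1)) = (⟨1, by omega⟩ : Fin n).castSucc := rfl
    have e2 : (⟨2, by omega⟩ : Fin (n+1)) = (⟨2, by omega⟩ : Fin n).castSucc := rfl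
    refine ⟨by rw [e0, Fin.snoc_castSucc]; exact hv0,
      by rw [e1, Fin.snoc_castSucc]; exact hv1,
      by rw [e2, Fin.snoc_castSucc]; exact hv2, ?_⟩
    -- the case where the last coordinate is in the third slot
    have key : ∀ i j : Fin (n+1), i ≠ j → i ≠ Fin.last n → j ≠ Fin.last n →
        Real.sign (det3 ((Fin.snoc v w : Fin (n+1) → Fin 3 → ℝ) i) ((Fin.snoc v w : Fin (n+1) → Fin 3 → ℝ) j) w) =
          χ' i j (Fin.last n) := by
      intro i j hij hi hj
      obtain ⟨i', rfl⟩ := Fin.exists_castSucc_eq.mpr hi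
      obtain ⟨j', rfl⟩ := Fin.exists_castSucc_eq.mpr hj
      rw [Fin.snoc_castSucc, Fin.snoc_castSucc]
      exact hw i' j' (fun h => hij (by rw [h]))
    intro i j k hij hik hjk
    by_cases hk : k = Fin.last n
    · subst hk
      rw [Fin.snoc_last]
      exact key i j hij hik hjk
    by_cases hj : j = Fin.last n
    · subst hj
      rw [Fin.snoc_last, det3_swap23, Real.sign_neg, key i k hik hij hk, (halt i k _).2]
    by_cases hi : i = Fin.last n
    · subst hi
      rw [Fin.snoc_last, det3_rot, key j k hjk hj hk]
      rw [(halt j (Fin.last n) k).1]  -- χ' last j k = -χ' j last k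
      rw [show χ' j (Fin.last n) k = -χ' j k (Fin.last n) from by
        have := (halt j k (Fin.last n)).2; linarith]
      ring
    · obtain ⟨i', rfl⟩ := Fin.exists_castSucc_eq.mpr hi
      obtain ⟨j', rfl⟩ := Fin.exists_castSucc_eq.mpr hj
      obtain ⟨k', rfl⟩ := Fin.exists_castSucc_eq.mpr hk
      rw [Fin.snoc_castSucc, Fin.snoc_castSucc, Fin.snoc_castSucc, hagree]
      exact hvr i' j' k' (fun h => hij (by rw [h])) (fun h => hik (by rw [h]))
        (fun h => hjk (by rw [h]))

end LexAux

namespace LexAux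

lemma fiber_nonempty {n : ℕ} (hn : 3 ≤ n)
    (χ : Fin n → Fin n → Fin n → ℝ)
    (hχpm : ∀ i j k : Fin n, i ≠ j → i ≠ k → j ≠ k → χ i j k = 1 ∨ χ i j k = -1)
    (a₁ a₂ a₃ : Fin n) (h12 : a₁ ≠ a₂) (h13 : a₁ ≠ a₃) (h23 : a₂ ≠ a₃)
    (σ₁ σ₂ σ₃ : ℝ) (hσ₁ : σ₁ = 1 ∨ σ₁ = -1) (hσ₂ : σ₂ = 1 ∨ σ₂ = -1)
    (hσ₃ : σ₃ = 1 ∨ σ₃ = -1)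
    (χ' : Fin (n+1) → Fin (n+1) → Fin (n+1) → ℝ)
    (hlex : ∀ i j : Fin n, i ≠ j →
      χ' i.castSucc j.castSucc (Fin.last n) =
        if a₁ ≠ i ∧ a₁ ≠ j then σ₁ * χ i j a₁
        else if a₂ ≠ i ∧ a₂ ≠ j then σ₂ * χ i j a₂
        else σ₃ * χ i j a₃)
    (v : Fin n → Fin 3 → ℝ) (hv : IsRealizationOfUniform χ v) :
    (lexFiber χ' v).Nonempty := by
  have hσ₁0 : σ₁ ≠ 0 := by rcases hσ₁ with h | h <;> rw [h] <;> norm_num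
  have hσ₂0 : σ₂ ≠ 0 := by rcases hσ₂ with h | h <;> rw [h] <;> norm_num
  have hσ₃0 : σ₃ ≠ 0 := by rcases hσ₃ with h | h <;> rw [h] <;> norm_num
  have H : ∀ p : Fin n × Fin n, ∃ ε₀ > 0, ∀ ε : ℝ, 0 < ε → ε < ε₀ → p.1 ≠ p.2 →
      Real.sign (σ₁ * det3 (v p.1) (v p.2) (v a₁) +
          ε * (σ₂ * det3 (v p.1) (v p.2) (v a₂)) +
          ε ^ 2 * (σ₃ * det3 (v p.1) (v p.2) (v a₃))) =
        χ' p.1.castSucc p.2.castSucc (Fin.last n) := by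
    rintro ⟨i, j⟩
    by_cases hij : i = j
    · exact ⟨1, one_pos, fun ε _ _ h => absurd hij h⟩
    simp only
    set D₁ := det3 (v i) (v j) (v a₁) with hD₁
    set D₂ := det3 (v i) (v j) (v a₂) with hD₂
    set D₃ := det3 (v i) (v j) (v a₃) with hD₃
    by_cases ha1 : a₁ ≠ i ∧ a₁ ≠ j
    · have hs : Real.sign D₁ = χ i j a₁ := hv i j a₁ hij (Ne.symm ha1.1) (Ne.symm ha1.2)
      have hD0 : D₁ ≠ 0 := by
        intro h; rw [h, Real.sign_zero] at hs
        rcases hχpm i j a₁ hij (Ne.symm ha1.1) (Ne.symm ha1.2) with h' | h' <;>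
          rw [h'] at hs <;> norm_num at hs
      obtain ⟨ε₀, hε₀, hgood⟩ := sign_perturb (A := σ₁ * D₁) (B := σ₂ * D₂) (C := σ₃ * D₃)
        (s := σ₁ * χ i j a₁) (Or.inl ⟨mul_ne_zero hσ₁0 hD0, by rw [sign_pm_mul hσ₁, hs]⟩)
      exact ⟨ε₀, hε₀, fun ε h1 h2 _ => by rw [hgood ε h1 h2, hlex i j hij, if_pos ha1]⟩
    · have ea1 : a₁ = i ∨ a₁ = j := by
        rcases not_and_or.mp ha1 with h | h
        · exact Or.inl (not_not.mp h)
        · exact Or.inr (not_not.mp h)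
      have hD₁0 : D₁ = 0 := by
        rcases ea1 with rfl | rfl
        · exact det3_self13 _ _
        · exact det3_self23 _ _
      by_cases ha2 : a₂ ≠ i ∧ a₂ ≠ j
      · have hs : Real.sign D₂ = χ i j a₂ := hv i j a₂ hij (Ne.symm ha2.1) (Ne.symm ha2.2)
        have hD0 : D₂ ≠ 0 := by
          intro h; rw [h, Real.sign_zero] at hs
          rcases hχpm i j a₂ hij (Ne.symm ha2.1) (Ne.symm ha2.2) with h' | h' <;>
            rw [h'] at hs <;> norm_num at hs
        obtain ⟨ε₀, hε₀, hgood⟩ := sign_perturb (A := σ₁ * D₁) (B := σ₂ * D₂) (C := σ₃ * D₃)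
          (s := σ₂ * χ i j a₂)
          (Or.inr (Or.inl ⟨by rw [hD₁0, mul_zero], mul_ne_zero hσ₂0 hD0,
            by rw [sign_pm_mul hσ₂, hs]⟩))
        exact ⟨ε₀, hε₀, fun ε h1 h2 _ => by
          rw [hgood ε h1 h2, hlex i j hij, if_neg ha1, if_pos ha2]⟩
      · have ea2 : a₂ = i ∨ a₂ = j := by
          rcases not_and_or.mp ha2 with h | h
          · exact Or.inl (not_not.mp h)
          · exact Or.inr (not_not.mp h)
        have h3 : a₃ ≠ i ∧ a₃ ≠ j ∧ D₂ = 0 := by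
          rcases ea1 with rfl | rfl
          · rcases ea2 with rfl | rfl
            · exact absurd rfl h12
            · exact ⟨Ne.symm h13, Ne.symm h23, det3_self23 _ _⟩
          · rcases ea2 with rfl | rfl
            · exact ⟨Ne.symm h23, Ne.symm h13, det3_self13 _ _⟩
            · exact absurd rfl h12
        obtain ⟨h3i, h3j, hD₂0⟩ := h3
        have hs : Real.sign D₃ = χ i j a₃ := hv i j a₃ hij (Ne.symm h3i) (Ne.symm h3j)
        have hD0 : D₃ ≠ 0 := by
          intro h; rw [h, Real.sign_zero] at hs
          rcases hχpm i j a₃ hij (Ne.symm h3i) (Ne.symm h3j) with h' | h' <;>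
            rw [h'] at hs <;> norm_num at hs
        obtain ⟨ε₀, hε₀, hgood⟩ := sign_perturb (A := σ₁ * D₁) (B := σ₂ * D₂) (C := σ₃ * D₃)
          (s := σ₃ * χ i j a₃)
          (Or.inr (Or.inr ⟨by rw [hD₁0, mul_zero], by rw [hD₂0, mul_zero],
            mul_ne_zero hσ₃0 hD0, by rw [sign_pm_mul hσ₃, hs]⟩))
        exact ⟨ε₀, hε₀, fun ε h1 h2 _ => by
          rw [hgood ε h1 h2, hlex i j hij, if_neg ha1, if_neg ha2]⟩
  choose ε₀ hε₀pos hε₀ using H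
  have hne : (Finset.univ : Finset (Fin n × Fin n)).Nonempty :=
    ⟨(⟨0, by omega⟩, ⟨0, by omega⟩), Finset.mem_univ _⟩
  set E := Finset.univ.inf' hne ε₀ with hE
  have hEpos : 0 < E := (Finset.lt_inf'_iff hne).mpr fun p _ => hε₀pos p
  set ε : ℝ := E / 2 with hεdef
  have hεpos : 0 < ε := by positivity
  have hεlt : ∀ p : Fin n × Fin n, ε < ε₀ p := fun p =>
    lt_of_lt_of_le (by rw [hεdef]; linarith) (Finset.inf'_le _ (Finset.mem_univ p))
  refine ⟨fun c => σ₁ * v a₁ c + ε * (σ₂ * v a₂ c) + ε ^ 2 * (σ₃ * v a₃ c), ?_⟩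
  intro i j hij
  have h := hε₀ (i, j) ε hεpos (hεlt (i, j)) hij
  have hd : det3 (v i) (v j) (fun c => σ₁ * v a₁ c + ε * (σ₂ * v a₂ c) +
      ε ^ 2 * (σ₃ * v a₃ c)) =
      σ₁ * det3 (v i) (v j) (v a₁) + ε * (σ₂ * det3 (v i) (v j) (v a₂)) +
        ε ^ 2 * (σ₃ * det3 (v i) (v j) (v a₃)) := by
    simp only [det3]; ring
  show Real.sign _ = _
  rw [hd]
  exact h

end LexAux

namespace LexAux

lemma pm_mul_pos_iff {s x : ℝ} (hs : s = 1 ∨ s = -1) :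
    0 < s * x ↔ Real.sign x = s := by
  rcases hs with rfl | rfl
  · rw [one_mul, sign_one_iff]
  · rw [sign_neg_one_iff]; constructor <;> intro h <;> nlinarith

lemma fiber_repr {n : ℕ} (hn : 3 ≤ n)
    (χ' : Fin (n+1) → Fin (n+1) → Fin (n+1) → ℝ)
    (hpm : ∀ i j : Fin n, i ≠ j → χ' i.castSucc j.castSucc (Fin.last n) = 1 ∨
      χ' i.castSucc j.castSucc (Fin.last n) = -1) :
    ∃ (l : ℕ) (C : Fin l → Fin 3 → MvPolynomial (Fin n × Fin 3) ℝ)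
      (c : Fin l → MvPolynomial (Fin n × Fin 3) ℝ),
      ∀ v : Fin n → Fin 3 → ℝ,
        lexFiber χ' v = {w : Fin 3 → ℝ | ∀ i,
          0 < (∑ j, MvPolynomial.eval (fun p => v p.1 p.2) (C i j) * w j) +
            MvPolynomial.eval (fun p => v p.1 p.2) (c i)} := by
  classical
  set e := (finProdFinEquiv : Fin n × Fin n ≃ Fin (n * n)) with he
  set cof : (Fin n × Fin n) → Fin 3 → MvPolynomial (Fin n × Fin 3) ℝ := fun p =>
    ![MvPolynomial.X (p.1, 1) * MvPolynomial.X (p.2, 2) -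
        MvPolynomial.X (p.1, 2) * MvPolynomial.X (p.2, 1),
      MvPolynomial.X (p.1, 2) * MvPolynomial.X (p.2, 0) -
        MvPolynomial.X (p.1, 0) * MvPolynomial.X (p.2, 2),
      MvPolynomial.X (p.1, 0) * MvPolynomial.X (p.2, 1) -
        MvPolynomial.X (p.1, 1) * MvPolynomial.X (p.2, 0)] with hcof
  refine ⟨n * n,
    fun i c => if (e.symm i).1 = (e.symm i).2 then 0 else
      MvPolynomial.C (χ' (e.symm i).1.castSucc (e.symm i).2.castSucc (Fin.last n)) *
        cof (e.symm i) c,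
    fun i => if (e.symm i).1 = (e.symm i).2 then 1 else 0, fun v => ?_⟩
  ext w
  have key : ∀ a b : Fin n,
      (∑ j, MvPolynomial.eval (fun q : Fin n × Fin 3 => v q.1 q.2)
          (MvPolynomial.C (χ' a.castSucc b.castSucc (Fin.last n)) * cof (a, b) j) * w j) =
        χ' a.castSucc b.castSucc (Fin.last n) * det3 (v a) (v b) w := by
    intro a b
    simp only [Fin.sum_univ_three, hcof, Matrix.cons_val_zero, Matrix.cons_val_one,
      Matrix.head_cons, Matrix.cons_val_two, Matrix.tail_cons, MvPolynomial.eval_mul,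
      MvPolynomial.eval_C, MvPolynomial.eval_sub, MvPolynomial.eval_X, det3]
    ring
  constructor
  · intro hw i
    simp only [Set.mem_setOf_eq]
    by_cases hp : (e.symm i).1 = (e.symm i).2
    · simp [hp]
    · have h := hw _ _ hp
      simp only [hp, ite_false]
      rw [key (e.symm i).1 (e.symm i).2, map_zero, add_zero]
      exact (pm_mul_pos_iff (hpm _ _ hp)).mpr h
  · intro hw i j hij
    have h := hw (e (i, j))
    simp only [Set.mem_setOf_eq, Equiv.symm_apply_apply] at h
    have hij' : ¬ ((i, j).1 = (i, j).2) := hij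
    rw [if_neg hij'] at h
    simp only [if_neg hij, map_zero, add_zero] at h
    rw [key i j] at h
    exact (pm_mul_pos_iff (hpm i j hij)).mp h

end LexAux

namespace LexAux

lemma chi'_pm {n : ℕ}
    (χ : Fin n → Fin n → Fin n → ℝ)
    (hχpm : ∀ i j k : Fin n, i ≠ j → i ≠ k → j ≠ k → χ i j k = 1 ∨ χ i j k = -1)
    (a₁ a₂ a₃ : Fin n) (h12 : a₁ ≠ a₂) (h13 : a₁ ≠ a₃) (h23 : a₂ ≠ a₃)
    (σ₁ σ₂ σ₃ : ℝ) (hσ₁ : σ₁ = 1 ∨ σ₁ = -1) (hσ₂ : σ₂ = 1 ∨ σ₂ = -1)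
    (hσ₃ : σ₃ = 1 ∨ σ₃ = -1)
    (χ' : Fin (n+1) → Fin (n+1) → Fin (n+1) → ℝ)
    (hlex : ∀ i j : Fin n, i ≠ j →
      χ' i.castSucc j.castSucc (Fin.last n) =
        if a₁ ≠ i ∧ a₁ ≠ j then σ₁ * χ i j a₁
        else if a₂ ≠ i ∧ a₂ ≠ j then σ₂ * χ i j a₂
        else σ₃ * χ i j a₃) :
    ∀ i j : Fin n, i ≠ j → χ' i.castSucc j.castSucc (Fin.last n) = 1 ∨
      χ' i.castSucc j.castSucc (Fin.last n) = -1 := by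
  intro i j hij
  rw [hlex i j hij]
  by_cases ha1 : a₁ ≠ i ∧ a₁ ≠ j
  · rw [if_pos ha1]
    rcases hσ₁ with rfl | rfl <;>
      rcases hχpm i j a₁ hij (Ne.symm ha1.1) (Ne.symm ha1.2) with h | h <;>
        rw [h] <;> norm_num
  · rw [if_neg ha1]
    by_cases ha2 : a₂ ≠ i ∧ a₂ ≠ j
    · rw [if_pos ha2]
      rcases hσ₂ with rfl | rfl <;>
        rcases hχpm i j a₂ hij (Ne.symm ha2.1) (Ne.symm ha2.2) with h | h <;>
          rw [h] <;> norm_num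
    · rw [if_neg ha2]
      have ea1 : a₁ = i ∨ a₁ = j := by
        rcases not_and_or.mp ha1 with h | h
        · exact Or.inl (not_not.mp h)
        · exact Or.inr (not_not.mp h)
      have ea2 : a₂ = i ∨ a₂ = j := by
        rcases not_and_or.mp ha2 with h | h
        · exact Or.inl (not_not.mp h)
        · exact Or.inr (not_not.mp h)
      have h3 : a₃ ≠ i ∧ a₃ ≠ j := by
        rcases ea1 with rfl | rfl
        · rcases ea2 with rfl | rfl
          · exact absurd rfl h12
          · exact ⟨Ne.symm h13, Ne.symm h23⟩
        · rcases ea2 with rfl | rfl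
          · exact ⟨Ne.symm h23, Ne.symm h13⟩
          · exact absurd rfl h12
      rcases hσ₃ with rfl | rfl <;>
        rcases hχpm i j a₃ hij (Ne.symm h3.1) (Ne.symm h3.2) with h | h <;>
          rw [h] <;> norm_num

lemma repr_open {l : ℕ} (Cm : Fin l → Fin 3 → ℝ) (c : Fin l → ℝ) :
    IsOpen {w : Fin 3 → ℝ | ∀ i, 0 < (∑ j, Cm i j * w j) + c i} := by
  have : {w : Fin 3 → ℝ | ∀ i, 0 < (∑ j, Cm i j * w j) + c i} =
      ⋂ i, {w : Fin 3 → ℝ | 0 < (∑ j, Cm i j * w j) + c i} := by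
    ext w; simp [Set.mem_iInter]
  rw [this]
  refine isOpen_iInter_of_finite fun i => isOpen_lt continuous_const ?_
  have : Continuous fun w : Fin 3 → ℝ => ∑ j, Cm i j * w j := by
    refine continuous_finset_sum _ fun j _ => (continuous_const.mul (continuous_apply j))
  exact this.add continuous_const

lemma repr_convex {l : ℕ} (Cm : Fin l → Fin 3 → ℝ) (c : Fin l → ℝ) :
    Convex ℝ {w : Fin 3 → ℝ | ∀ i, 0 < (∑ j, Cm i j * w j) + c i} := by
  intro w1 h1 w2 h2 a b ha hb hab
  intro i
  have e1 := h1 i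
  have e2 := h2 i
  have hsum : (∑ j, Cm i j * (a • w1 + b • w2) j) =
      a * (∑ j, Cm i j * w1 j) + b * (∑ j, Cm i j * w2 j) := by
    rw [Finset.mul_sum, Finset.mul_sum, ← Finset.sum_add_distrib]
    refine Finset.sum_congr rfl fun j _ => ?_
    simp only [Pi.add_apply, Pi.smul_apply, smul_eq_mul]
    ring
  show 0 < (∑ j, Cm i j * (a • w1 + b • w2) j) + c i
  rw [hsum]
  have key2 : a * ((∑ j, Cm i j * w1 j) + c i) + b * ((∑ j, Cm i j * w2 j) + c i) =
      a * (∑ j, Cm i j * w1 j) + b * (∑ j, Cm i j * w2 j) + c i := by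
    linear_combination c i * hab
  rw [← key2]
  rcases lt_or_eq_of_le ha with ha' | ha'
  · exact add_pos_of_pos_of_nonneg (mul_pos ha' e1) (mul_nonneg hb e2.le)
  · have hb1 : b = 1 := by linarith
    rw [← ha', hb1]
    simp only [zero_mul, one_mul, zero_add]
    linarith

end LexAux


/-- **Lemma 2.1, realizable rank-3 case**: for a lexicographic extension `χ'` of a realizable
uniform rank-3 chirotope `χ`, the deletion map `ℛ(χ') → ℛ(χ)` is well defined and surjective,
and each of its fibers is exactly `lexFiber χ' v`, a nonempty open convex subset of `ℝ³` cut
out by finitely many strict linear inequalities in `w` whose coefficients depend polynomially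
on `v`. -/
theorem lex_extension_deletion_surjective_polyhedral_fibers (n : ℕ) (hn : 3 ≤ n)
    (χ : Fin n → Fin n → Fin n → ℝ) (hχ : IsRealizableUniformChirotope χ)
    (hnorm : χ ⟨0, by omega⟩ ⟨1, by omega⟩ ⟨2, by omega⟩ = 1)
    (a₁ a₂ a₃ : Fin n) (h12 : a₁ ≠ a₂) (h13 : a₁ ≠ a₃) (h23 : a₂ ≠ a₃)
    (σ₁ σ₂ σ₃ : ℝ) (hσ₁ : σ₁ = 1 ∨ σ₁ = -1) (hσ₂ : σ₂ = 1 ∨ σ₂ = -1)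
    (hσ₃ : σ₃ = 1 ∨ σ₃ = -1)
    (χ' : Fin (n + 1) → Fin (n + 1) → Fin (n + 1) → ℝ)
    (hχ' : IsLexExtension χ a₁ a₂ a₃ σ₁ σ₂ σ₃ χ') :
    (∀ v' ∈ uniformChirotopeRealizationSpace (show 3 ≤ n + 1 by omega) χ',
      (fun i : Fin n => v' i.castSucc) ∈ uniformChirotopeRealizationSpace hn χ) ∧
    (∀ v ∈ uniformChirotopeRealizationSpace hn χ,
      ∃ w : Fin 3 → ℝ,
        Fin.snoc v w ∈ uniformChirotopeRealizationSpace (show 3 ≤ n + 1 by omega) χ') ∧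
    (∀ v ∈ uniformChirotopeRealizationSpace hn χ,
      {w : Fin 3 → ℝ |
          Fin.snoc v w ∈ uniformChirotopeRealizationSpace (show 3 ≤ n + 1 by omega) χ'} =
        lexFiber χ' v ∧
      (lexFiber χ' v).Nonempty ∧ IsOpen (lexFiber χ' v) ∧ Convex ℝ (lexFiber χ' v)) ∧
    ∃ (l : ℕ) (C : Fin l → Fin 3 → MvPolynomial (Fin n × Fin 3) ℝ)
      (c : Fin l → MvPolynomial (Fin n × Fin 3) ℝ),
      ∀ v ∈ uniformChirotopeRealizationSpace hn χ,
        lexFiber χ' v = {w : Fin 3 → ℝ | ∀ i,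
          0 < (∑ j, MvPolynomial.eval (fun p => v p.1 p.2) (C i j) * w j) +
            MvPolynomial.eval (fun p => v p.1 p.2) (c i)} := by
  obtain ⟨hχalt, hχpm, -⟩ := hχ
  obtain ⟨h'alt, h'agree, h'lex⟩ := hχ'
  have hpm' := LexAux.chi'_pm χ hχpm a₁ a₂ a₃ h12 h13 h23 σ₁ σ₂ σ₃ hσ₁ hσ₂ hσ₃ χ' h'lex
  obtain ⟨l, C, c, hrepr⟩ := LexAux.fiber_repr hn χ' hpm'
  refine ⟨?_, ?_, ?_, l, C, c, fun v _ => hrepr v⟩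
  · rintro v' ⟨h0, h1, h2, hr⟩
    refine ⟨h0, h1, h2, ?_⟩
    intro i j k hij hik hjk
    rw [← h'agree i j k]
    exact hr i.castSucc j.castSucc k.castSucc ((Fin.castSucc_injective n).ne hij)
      ((Fin.castSucc_injective n).ne hik) ((Fin.castSucc_injective n).ne hjk)
  · intro v hv
    obtain ⟨w, hw⟩ := LexAux.fiber_nonempty hn χ hχpm a₁ a₂ a₃ h12 h13 h23 σ₁ σ₂ σ₃
      hσ₁ hσ₂ hσ₃ χ' h'lex v hv.2.2.2
    exact ⟨w, (LexAux.snoc_mem_iff hn χ χ' h'alt h'agree v hv w).mpr hw⟩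
  · intro v hv
    refine ⟨Set.ext fun w => LexAux.snoc_mem_iff hn χ χ' h'alt h'agree v hv w,
      LexAux.fiber_nonempty hn χ hχpm a₁ a₂ a₃ h12 h13 h23 σ₁ σ₂ σ₃ hσ₁ hσ₂ hσ₃ χ'
        h'lex v hv.2.2.2, ?_, ?_⟩
    · rw [hrepr v]; exact LexAux.repr_open _ _
    · rw [hrepr v]; exact LexAux.repr_convex _ _
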